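/- In the woman self-manipulation game with strategic women P_w, the inconspicuous dynamic (starting from the truthful profile and at each step performing an optimal inconspicuous self-manipulation by some strategic woman with respect to the current instance, if possible) converges to a fixed point in at most n² non-trivial steps. -/
import Mathlib


open Classical

/-- A strict preference list over `Fin n`, encoded as a permutation whose inverse
gives the rank of each alternative (lower rank = more preferred). -/
abbrev Pref (n : ℕ) := Equiv.Perm (Fin n)

/-- A profile of preference lists, one for each of the `n` agents on one side. -/
abbrev Profile (n : ℕ) := Fin n → Pref n

/-- `a` is strictly preferred to `b` under the list `p`. -/
def SPref {n : ℕ} (p : Pref n) (a b : Fin n) : Prop := p.symm a < p.symm b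

/-- `a` is weakly preferred to `b` under the list `p`. -/
def WPref {n : ℕ} (p : Pref n) (a b : Fin n) : Prop := p.symm a ≤ p.symm b

/-- A matching: a bijection from men to women. -/
abbrev Matching (n : ℕ) := Fin n ≃ Fin n

/-- `(m, w)` is a blocking pair of `μ` w.r.t. men's profile `mp` and women's profile `wp`. -/
def Blocks {n : ℕ} (mp wp : Profile n) (μ : Matching n) (m w : Fin n) : Prop :=
  SPref (mp m) w (μ m) ∧ SPref (wp w) m (μ.symm w)

/-- A matching is stable if it admits no blocking pair. -/
def IsStable {n : ℕ} (mp wp : Profile n) (μ : Matching n) : Prop :=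
  ∀ m w, ¬ Blocks mp wp μ m w

instance {n : ℕ} : Nonempty (Matching n) := ⟨Equiv.refl _⟩

/-- The outcome of the men-proposing Deferred Acceptance algorithm, specified as
the (unique) man-optimal stable matching of the instance `⟨mp, wp⟩`. -/
noncomputable def DA {n : ℕ} (mp wp : Profile n) : Matching n :=
  Classical.epsilon fun μ => IsStable mp wp μ ∧
    ∀ μ' : Matching n, IsStable mp wp μ' → ∀ m, WPref (mp m) (μ m) (μ' m)

/-- An accomplice manipulation at strategy profile `p` (men's reports; women truthful
with profile `wp`) by the pair `(m, w)`, via misreport `q` of man `m`: woman `w`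
strictly benefits and man `m` is not worse off, w.r.t. the true profiles `mp`, `wp`. -/
def AccManip {n : ℕ} (mp wp : Profile n) (p : Profile n) (m w : Fin n) (q : Pref n) : Prop :=
  SPref (wp w) ((DA (Function.update p m q) wp).symm w) ((DA p wp).symm w) ∧
  WPref (mp m) (DA (Function.update p m q) wp m) (DA p wp m)

/-- `p` is a Nash equilibrium of the accomplice manipulation game with strategic pairs `P`. -/
def IsNE {n : ℕ} (mp wp : Profile n) (P : Set (Fin n × Fin n)) (p : Profile n) : Prop :=
  ∀ m w, (m, w) ∈ P → ¬ ∃ q, AccManip mp wp p m w q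

/-- `q` results from the list `cur` by a push-up of the set `X` above `star`
(= the current DA partner): the set of women ranked above `star` in `q` is exactly
the set of those ranked above `star` in `cur` together with `X`. -/
def IsPushUp {n : ℕ} (cur : Pref n) (star : Fin n) (X : Set (Fin n)) (q : Pref n) : Prop :=
  ∀ w, SPref q w star ↔ (SPref cur w star ∨ w ∈ X)

/-- One step of the push-up dynamic: some strategic pair `(m, w) ∈ P` performs a
no-regret push-up accomplice manipulation at profile `p`, yielding `p'`. -/
def PushUpStep {n : ℕ} (mp wp : Profile n) (P : Set (Fin n × Fin n))
    (p p' : Profile n) : Prop :=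
  ∃ m w, (m, w) ∈ P ∧ ∃ X q,
    X ⊆ {w' | SPref (p m) (DA p wp m) w'} ∧
    IsPushUp (p m) (DA p wp m) X q ∧
    p' = Function.update p m q ∧
    SPref (wp w) ((DA p' wp).symm w) ((DA p wp).symm w) ∧
    WPref (mp m) (DA p' wp m) (DA p wp m)

/-- A push-up dynamic: starts at the truthful profile, and at each step performs a
no-regret push-up accomplice manipulation by some strategic pair if one exists,
otherwise stays put. -/
def IsPushUpDynamic {n : ℕ} (mp wp : Profile n) (P : Set (Fin n × Fin n))
    (p : ℕ → Profile n) : Prop :=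
  p 0 = mp ∧ ∀ t,
    PushUpStep mp wp P (p t) (p (t + 1)) ∨
    (p (t + 1) = p t ∧ ¬ ∃ p', PushUpStep mp wp P (p t) p')

/-- A one-for-many manipulation at profile `p` by man `m` for beneficiary set `B`,
via misreport `q`: every woman in `B` weakly benefits, some woman in `B` strictly
benefits, and `m` is not worse off (true preferences). -/
def OFMManip {n : ℕ} (mp wp : Profile n) (p : Profile n) (m : Fin n)
    (B : Set (Fin n)) (q : Pref n) : Prop :=
  (∀ w ∈ B, WPref (wp w) ((DA (Function.update p m q) wp).symm w) ((DA p wp).symm w)) ∧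
  (∃ w ∈ B, SPref (wp w) ((DA (Function.update p m q) wp).symm w) ((DA p wp).symm w)) ∧
  WPref (mp m) (DA (Function.update p m q) wp m) (DA p wp m)

/-- Nash equilibrium of the one-for-many manipulation game with strategic men `Pm`
and beneficiary sets `B`. -/
def IsNEOFM {n : ℕ} (mp wp : Profile n) (Pm : Set (Fin n)) (B : Fin n → Set (Fin n))
    (p : Profile n) : Prop :=
  ∀ m ∈ Pm, ¬ ∃ q, OFMManip mp wp p m (B m) q

/-- `q` is obtained from `cur` by promoting (weakly moving up) exactly one man `a`,
leaving the relative order of all other men unchanged. -/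
def Inconspicuous {n : ℕ} (cur q : Pref n) : Prop :=
  ∃ a, (∀ x y, x ≠ a → y ≠ a → (SPref q x y ↔ SPref cur x y)) ∧
    (∀ x, SPref cur a x → SPref q a x)

/-- One step of the inconspicuous dynamic for the woman self-manipulation game:
some strategic woman `w ∈ Pw` performs an optimal inconspicuous self-manipulation
in the current instance `⟨mp, pw⟩`. -/
def InconspicuousStep {n : ℕ} (mp : Profile n) (Pw : Set (Fin n))
    (pw pw' : Profile n) : Prop :=
  ∃ w ∈ Pw, ∃ q,
    pw' = Function.update pw w q ∧
    Inconspicuous (pw w) q ∧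
    SPref (pw w) ((DA mp pw').symm w) ((DA mp pw).symm w) ∧
    ∀ q', WPref (pw w) ((DA mp pw').symm w) ((DA mp (Function.update pw w q')).symm w)

/-- The inconspicuous dynamic of the woman self-manipulation game: starts at the
truthful profile `wp`, and at each step performs an optimal inconspicuous
self-manipulation by some strategic woman if one exists, otherwise stays put. -/
def IsInconspicuousDynamic {n : ℕ} (mp wp : Profile n) (Pw : Set (Fin n))
    (pw : ℕ → Profile n) : Prop :=
  pw 0 = wp ∧ ∀ t,
    InconspicuousStep mp Pw (pw t) (pw (t + 1)) ∨
    (pw (t + 1) = pw t ∧ ¬ ∃ pw', InconspicuousStep mp Pw (pw t) pw')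


section Aux

variable {n : ℕ}

lemma spref_of_wpref_ne {p : Pref n} {a b : Fin n} (h : WPref p a b) (hne : a ≠ b) :
    SPref p a b :=
  lt_of_le_of_ne h (fun hc => hne (p.symm.injective hc))

lemma wpref_of_not_spref {p : Pref n} {a b : Fin n} (h : ¬ SPref p a b) : WPref p b a :=
  le_of_not_gt h

lemma spref_or {p : Pref n} {a b : Fin n} (hne : a ≠ b) : SPref p a b ∨ SPref p b a :=
  lt_or_gt_of_ne (fun hc => hne (p.symm.injective hc))

namespace GS

variable (mp wp : Profile n)

/-- `m` has (weakly) already proposed to `w` when his pointer is at `s m`. -/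
def proposed (s : Fin n → Fin n) (m w : Fin n) : Prop := (mp m).symm w ≤ s m

/-- current proposal target of `m`. -/
def target (s : Fin n → Fin n) (m : Fin n) : Fin n := mp m (s m)

lemma proposed_target (s : Fin n → Fin n) (m : Fin n) : proposed mp s m (target mp s m) := by
  unfold proposed target
  rw [Equiv.symm_apply_apply]

def InvH (s : Fin n → Fin n) : Prop :=
  ∀ m w, proposed mp s m w → target mp s m ≠ w →
    ∃ m', proposed mp s m' w ∧ SPref (wp w) m' m

def InvO (s : Fin n → Fin n) : Prop :=
  ∀ ν : Matching n, IsStable mp wp ν → ∀ m, s m ≤ (mp m).symm (ν m)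

def Rejected (s : Fin n → Fin n) (m : Fin n) : Prop :=
  ∃ m', proposed mp s m' (target mp s m) ∧ SPref (wp (target mp s m)) m' m

lemma bestSuitor {s : Fin n → Fin n} (hH : InvH mp wp s) {w m₁ : Fin n}
    (hm₁ : proposed mp s m₁ w) :
    ∃ m, proposed mp s m w ∧ target mp s m = w ∧
      ∀ m', proposed mp s m' w → WPref (wp w) m m' := by
  classical
  obtain ⟨m, hmF, hmin⟩ := Finset.exists_min_image
    (Finset.univ.filter fun m => proposed mp s m w) (fun m => (wp w).symm m)
    ⟨m₁, by simp [hm₁]⟩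
  simp only [Finset.mem_filter, Finset.mem_univ, true_and] at hmF hmin
  have hbest : ∀ m', proposed mp s m' w → WPref (wp w) m m' := fun m' h => hmin m' h
  refine ⟨m, hmF, ?_, hbest⟩
  by_contra ht
  obtain ⟨m', hp', hs'⟩ := hH m w hmF ht
  exact absurd hs' (not_lt.mpr (hbest m' hp'))

lemma no_reject_last {s : Fin n → Fin n} (hH : InvH mp wp s) {m₂ : Fin n}
    (hall : ∀ w, proposed mp s m₂ w) (hrej : Rejected mp wp s m₂) : False := by
  classical
  choose f hf1 hf2 hf3 using fun w => bestSuitor mp wp hH (hall w)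
  have hinj : Function.Injective f := fun w1 w2 he => by
    rw [← hf2 w1, he, hf2 w2]
  obtain ⟨w₀, hw₀⟩ := Finite.surjective_of_injective hinj m₂
  have ht : target mp s m₂ = w₀ := by rw [← hw₀]; exact hf2 w₀
  obtain ⟨m', hm'p, hm's⟩ := hrej
  rw [ht] at hm'p hm's
  have hle := hf3 w₀ m' hm'p
  rw [hw₀] at hle
  exact absurd hm's (not_lt.mpr hle)

lemma rejected_lt {s : Fin n → Fin n} (hH : InvH mp wp s) {m₂ : Fin n}
    (hrej : Rejected mp wp s m₂) : (s m₂ : ℕ) + 1 < n := by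
  rcases Nat.lt_or_ge ((s m₂ : ℕ) + 1) n with h | h
  · exact h
  · exfalso
    apply no_reject_last mp wp hH _ hrej
    intro w
    show (mp m₂).symm w ≤ s m₂
    rw [Fin.le_def]
    have h1 := ((mp m₂).symm w).is_lt
    have h2 := (s m₂).is_lt
    omega


lemma proposed_mono {s : Fin n → Fin n} {m₂ : Fin n} {v : Fin n} (hv : s m₂ ≤ v)
    {m w : Fin n} (h : proposed mp s m w) :
    proposed mp (Function.update s m₂ v) m w := by
  unfold proposed at *
  by_cases hm : m = m₂
  · subst hm; rw [Function.update_self]; exact le_trans h hv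
  · rwa [Function.update_of_ne hm]

lemma invH_step {s : Fin n → Fin n} (hH : InvH mp wp s) {m₂ : Fin n}
    (hrej : Rejected mp wp s m₂) (hlt : (s m₂ : ℕ) + 1 < n) :
    InvH mp wp (Function.update s m₂ ⟨(s m₂ : ℕ) + 1, hlt⟩) := by
  have hv : s m₂ ≤ (⟨(s m₂ : ℕ) + 1, hlt⟩ : Fin n) := by
    rw [Fin.le_def]; simp
  intro m w hp ht
  by_cases hm : m = m₂
  · subst hm
    have hp' : proposed mp s m w := by
      have h1 : ((mp m).symm w : ℕ) ≤ (s m : ℕ) + 1 := by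
        have := hp
        unfold proposed at this
        rw [Function.update_self, Fin.le_def] at this
        exact this
      have h2 : ((mp m).symm w : ℕ) ≠ (s m : ℕ) + 1 := by
        intro hc
        apply ht
        unfold target
        rw [Function.update_self]
        have : (mp m).symm w = (⟨(s m : ℕ) + 1, hlt⟩ : Fin n) := by
          rw [Fin.ext_iff]; exact hc
        rw [← this, Equiv.apply_symm_apply]
      show (mp m).symm w ≤ s m
      rw [Fin.le_def]; omega
    by_cases htw : target mp s m = w
    · obtain ⟨m', h1, h2⟩ := hrej
      rw [htw] at h1 h2
      exact ⟨m', proposed_mono mp hv h1, h2⟩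
    · obtain ⟨m', h1, h2⟩ := hH m w hp' htw
      exact ⟨m', proposed_mono mp hv h1, h2⟩
  · have hp' : proposed mp s m w := by
      unfold proposed at hp ⊢
      rwa [Function.update_of_ne hm] at hp
    have ht' : target mp s m ≠ w := by
      unfold target at ht ⊢
      rwa [Function.update_of_ne hm] at ht
    obtain ⟨m', h1, h2⟩ := hH m w hp' ht'
    exact ⟨m', proposed_mono mp hv h1, h2⟩

lemma invO_step {s : Fin n → Fin n} (hO : InvO mp wp s) {m₂ : Fin n}
    (hrej : Rejected mp wp s m₂) (hlt : (s m₂ : ℕ) + 1 < n) :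
    InvO mp wp (Function.update s m₂ ⟨(s m₂ : ℕ) + 1, hlt⟩) := by
  intro ν hν m
  by_cases hm : m = m₂
  · subst hm
    rw [Function.update_self, Fin.le_def]
    show (s m : ℕ) + 1 ≤ ((mp m).symm (ν m) : ℕ)
    have h0 := hO ν hν m
    rw [Fin.le_def] at h0
    rcases Nat.lt_or_ge (s m : ℕ) ((mp m).symm (ν m) : ℕ) with h | h
    · omega
    · exfalso
      have heq : (mp m).symm (ν m) = s m := by rw [Fin.ext_iff]; omega
      have hνm : ν m = target mp s m := by
        unfold target; rw [← heq, Equiv.apply_symm_apply]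
      obtain ⟨m', h1, h2⟩ := hrej
      set w₀ := target mp s m with hw₀
      have hm' : m' ≠ m := fun hc => absurd h2 (by rw [hc]; exact lt_irrefl _)
      apply hν m' w₀
      constructor
      · have hOm' := hO ν hν m'
        have hlt2 : (mp m').symm w₀ ≤ (mp m').symm (ν m') := le_trans h1 hOm'
        apply lt_of_le_of_ne hlt2
        intro hc
        have : w₀ = ν m' := (mp m').symm.injective hc
        exact hm' (ν.injective (by rw [← this, ← hνm]))
      · show SPref (wp w₀) m' (ν.symm w₀)
        have : ν.symm w₀ = m := by rw [← hνm, Equiv.symm_apply_apply]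
        rwa [this]
  · rw [Function.update_of_ne hm]
    exact hO ν hν m

lemma terminal_good {s : Fin n → Fin n} (hH : InvH mp wp s)
    (hO : InvO mp wp s) (hterm : ∀ m, ¬ Rejected mp wp s m) :
    ∃ μ : Matching n, IsStable mp wp μ ∧
      ∀ μ' : Matching n, IsStable mp wp μ' → ∀ m, WPref (mp m) (μ m) (μ' m) := by
  classical
  have hinj : Function.Injective (target mp s) := by
    intro m1 m2 he
    by_contra hne
    have hp1 : proposed mp s m1 (target mp s m1) := proposed_target mp s m1
    have hp2 : proposed mp s m2 (target mp s m1) := by rw [he]; exact proposed_target mp s m2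
    rcases spref_or (p := wp (target mp s m1)) hne with hs | hs
    · refine hterm m2 ⟨m1, ?_, ?_⟩ <;> rw [← he]
      · exact hp1
      · exact hs
    · exact hterm m1 ⟨m2, hp2, hs⟩
  have hbij : Function.Bijective (target mp s) := Finite.injective_iff_bijective.mp hinj
  refine ⟨Equiv.ofBijective _ hbij, ?_, ?_⟩
  · intro m w hblock
    obtain ⟨hb1, hb2⟩ := hblock
    have hμm : (Equiv.ofBijective _ hbij) m = target mp s m := rfl
    have hpm : proposed mp s m w := by
      unfold proposed
      rw [Fin.le_def]
      have : ((mp m).symm w : ℕ) < ((mp m).symm (target mp s m) : ℕ) := by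
        have := hb1
        rw [hμm] at this
        exact this
      unfold target at this
      rw [Equiv.symm_apply_apply] at this
      omega
    obtain ⟨m₀, hbp, hbt, hbb⟩ := bestSuitor mp wp hH hpm
    have hsymm : (Equiv.ofBijective _ hbij).symm w = m₀ := by
      apply (Equiv.ofBijective _ hbij).injective
      rw [Equiv.apply_symm_apply]
      exact (show (Equiv.ofBijective _ hbij) m₀ = w from hbt).symm ▸ rfl
    rw [hsymm] at hb2
    exact absurd hb2 (not_lt.mpr (hbb m hpm))
  · intro μ' hμ' m
    have h1 := hO μ' hμ' m
    show (mp m).symm ((Equiv.ofBijective _ hbij) m) ≤ (mp m).symm (μ' m)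
    have : (mp m).symm ((Equiv.ofBijective _ hbij) m) = s m := by
      show (mp m).symm (target mp s m) = s m
      unfold target; rw [Equiv.symm_apply_apply]
    rw [this]
    exact h1


lemma gs_aux (hn : 0 < n) : ∀ (k : ℕ) (s : Fin n → Fin n), InvH mp wp s → InvO mp wp s →
    n * n ≤ (∑ m, (s m : ℕ)) + k →
    ∃ μ : Matching n, IsStable mp wp μ ∧
      ∀ μ' : Matching n, IsStable mp wp μ' → ∀ m, WPref (mp m) (μ m) (μ' m) := by
  intro k
  induction k with
  | zero =>
    intro s _ _ hb
    exfalso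
    have hsum : ∑ m, (s m : ℕ) ≤ ∑ _m : Fin n, (n - 1) :=
      Finset.sum_le_sum (fun m _ => by have := (s m).is_lt; omega)
    rw [Finset.sum_const, Finset.card_univ, Fintype.card_fin, smul_eq_mul] at hsum
    have h2 : n * (n - 1) + n = n * n := by
      rw [← Nat.mul_succ]
      congr 1
      omega
    omega
  | succ k ih =>
    intro s hH hO hb
    by_cases hterm : ∀ m, ¬ Rejected mp wp s m
    · exact terminal_good mp wp hH hO hterm
    · push_neg at hterm
      obtain ⟨m₂, hrej⟩ := hterm
      have hlt := rejected_lt mp wp hH hrej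
      refine ih (Function.update s m₂ ⟨(s m₂ : ℕ) + 1, hlt⟩)
        (invH_step mp wp hH hrej hlt) (invO_step mp wp hO hrej hlt) ?_
      have hsum : ∑ m, ((Function.update s m₂ ⟨(s m₂ : ℕ) + 1, hlt⟩) m : ℕ)
          = (∑ m, (s m : ℕ)) + 1 := by
        have hfe : ∀ m, ((Function.update s m₂ ⟨(s m₂ : ℕ) + 1, hlt⟩) m : ℕ)
            = Function.update (fun m => (s m : ℕ)) m₂ ((s m₂ : ℕ) + 1) m := by
          intro m
          by_cases hm : m = m₂
          · subst hm; simp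
          · simp [Function.update_of_ne hm]
        rw [Finset.sum_congr rfl (fun m _ => hfe m)]
        rw [Finset.sum_update_of_mem (Finset.mem_univ m₂)]
        rw [← Finset.sum_erase_add Finset.univ _ (Finset.mem_univ m₂), Finset.sdiff_singleton_eq_erase]
        omega
      omega

end GS

lemma exists_DA_spec (mp wp : Profile n) :
    ∃ μ : Matching n, IsStable mp wp μ ∧
      ∀ μ' : Matching n, IsStable mp wp μ' → ∀ m, WPref (mp m) (μ m) (μ' m) := by
  rcases Nat.eq_zero_or_pos n with h0 | hn
  · subst h0
    exact ⟨Equiv.refl _, fun m w => m.elim0, fun μ' _ m => m.elim0⟩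
  · apply GS.gs_aux mp wp hn (n * n) (fun _ => ⟨0, hn⟩)
    · intro m w hp ht
      exfalso
      apply ht
      have h1 : ((mp m).symm w : ℕ) = 0 := by
        have h := hp
        unfold GS.proposed at h
        rw [Fin.le_def] at h
        simpa using h
      have h2 : (mp m).symm w = (⟨0, hn⟩ : Fin n) := by rw [Fin.ext_iff]; exact h1
      show mp m ⟨0, hn⟩ = w
      rw [← h2, Equiv.apply_symm_apply]
    · intro ν _ m
      show (⟨0, hn⟩ : Fin n) ≤ _
      rw [Fin.le_def]
      exact Nat.zero_le _
    · simp

lemma DA_spec (mp wp : Profile n) : IsStable mp wp (DA mp wp) ∧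
    ∀ μ' : Matching n, IsStable mp wp μ' → ∀ m, WPref (mp m) (DA mp wp m) (μ' m) := by
  unfold DA
  exact Classical.epsilon_spec (exists_DA_spec mp wp)

lemma DA_pess (mp wp : Profile n) (ν : Matching n) (hν : IsStable mp wp ν) (w : Fin n) :
    WPref (wp w) (ν.symm w) ((DA mp wp).symm w) := by
  by_cases he : ν.symm w = (DA mp wp).symm w
  · rw [he]
    exact le_refl _
  · have hμm : DA mp wp ((DA mp wp).symm w) = w := (DA mp wp).apply_symm_apply w
    set m := (DA mp wp).symm w with hm
    have hνm : ν m ≠ w := by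
      intro hc
      exact he (by rw [← hc, Equiv.symm_apply_apply])
    have hopt := (DA_spec mp wp).2 ν hν m
    rw [hμm] at hopt
    have hs : SPref (mp m) w (ν m) := spref_of_wpref_ne hopt (fun hc => hνm hc.symm)
    have hnb := hν m w
    have hns : ¬ SPref (wp w) m (ν.symm w) := fun hc => hnb ⟨hs, hc⟩
    exact wpref_of_not_spref hns

lemma cr_lt {n' : ℕ} {k i j : Fin (n' + 1)} (hi : i ≠ k) (hj : j ≠ k) (hij : i < j) :
    Fin.cycleRange k i < Fin.cycleRange k j := by
  have hij' := Fin.lt_def.mp hij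
  rcases lt_or_gt_of_ne hi with h1 | h1 <;> rcases lt_or_gt_of_ne hj with h2 | h2
  · rw [Fin.lt_def, Fin.coe_cycleRange_of_lt h1, Fin.coe_cycleRange_of_lt h2]
    omega
  · rw [Fin.lt_def, Fin.coe_cycleRange_of_lt h1, Fin.cycleRange_of_gt h2]
    have ha := Fin.lt_def.mp h1
    have hb := Fin.lt_def.mp h2
    omega
  · have ha := Fin.lt_def.mp h1
    have hb := Fin.lt_def.mp h2
    omega
  · rw [Fin.cycleRange_of_gt h1, Fin.cycleRange_of_gt h2]
    exact hij

lemma key_stable (mp pw : Profile n) (w : Fin n) (q : Pref n)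
    (hinc : Inconspicuous (pw w) q)
    (hopt : ∀ q', WPref (pw w) ((DA mp (Function.update pw w q)).symm w)
        ((DA mp (Function.update pw w q')).symm w)) :
    IsStable mp pw (DA mp (Function.update pw w q)) := by
  classical
  intro x w' hblock
  by_cases hw : w' = w
  swap
  · exact (DA_spec mp (Function.update pw w q)).1 x w'
      ⟨hblock.1, by rw [Function.update_of_ne hw]; exact hblock.2⟩
  subst hw
  obtain ⟨hb1, hb2⟩ := hblock
  have hq : ¬ SPref q x ((DA mp (Function.update pw w' q)).symm w') := by
    intro hc
    exact (DA_spec mp (Function.update pw w' q)).1 x w'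
      ⟨hb1, by rw [Function.update_self]; exact hc⟩
  obtain ⟨a, ha1, ha2⟩ := hinc
  have hxa : x ≠ a := by
    intro hc
    subst hc
    exact hq (ha2 _ hb2)
  have hba : (DA mp (Function.update pw w' q)).symm w' = a := by
    by_contra hne
    exact hq ((ha1 x _ hxa hne).mpr hb2)
  rw [hba] at hb2
  obtain ⟨n', rfl⟩ : ∃ n', n = n' + 1 := ⟨n - 1, by have := x.pos; omega⟩
  -- the report r : q with x moved to the top
  set k : Fin (n' + 1) := q.symm x with hk
  set r : Pref (n' + 1) := (q.symm.trans (Fin.cycleRange k)).symm with hrdef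
  have hrs : ∀ z, r.symm z = Fin.cycleRange k (q.symm z) := fun z => by
    rw [hrdef, Equiv.symm_symm, Equiv.trans_apply]
  have hA : ∀ z, z ≠ x → SPref r x z := by
    intro z hz
    show r.symm x < r.symm z
    have h0 : Fin.cycleRange k (q.symm x) = 0 := by
      rw [← hk]
      exact Fin.cycleRange_self k
    have hne0 : Fin.cycleRange k (q.symm z) ≠ 0 := by
      intro hc0
      apply hz
      have h1 : q.symm z = k := (Fin.cycleRange k).injective (by rw [hc0, ← h0, hk])
      exact q.symm.injective (h1.trans hk)
    rw [hrs, hrs, h0]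
    exact lt_of_le_of_ne (Fin.zero_le _) (Ne.symm hne0)
  have hB : ∀ z c, z ≠ x → c ≠ x → SPref q z c → SPref r z c := by
    intro z c hz hc hqzc
    show r.symm z < r.symm c
    rw [hrs, hrs]
    refine cr_lt ?_ ?_ hqzc
    · exact fun h => hz (q.symm.injective (h.trans hk))
    · exact fun h => hc (q.symm.injective (h.trans hk))
  by_cases hcx : (DA mp (Function.update pw w' r)).symm w' = x
  · have hle := hopt r
    rw [hba, hcx] at hle
    exact absurd hb2 (not_lt.mpr hle)
  · -- μ'' := DA of the r-instance is stable for the q-instance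
    have hstab : IsStable mp (Function.update pw w' q) (DA mp (Function.update pw w' r)) := by
      intro z w₂ hbl
      obtain ⟨hz1, hz2⟩ := hbl
      by_cases hw₂ : w₂ = w'
      · subst hw₂
        rw [Function.update_self] at hz2
        by_cases hzx : z = x
        · subst hzx
          exact (DA_spec mp (Function.update pw w₂ r)).1 z w₂
            ⟨hz1, by rw [Function.update_self]; exact hA _ hcx⟩
        · exact (DA_spec mp (Function.update pw w₂ r)).1 z w₂
            ⟨hz1, by rw [Function.update_self]; exact hB z _ hzx hcx hz2⟩
      · rw [Function.update_of_ne hw₂] at hz2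
        exact (DA_spec mp (Function.update pw w' r)).1 z w₂
          ⟨hz1, by rw [Function.update_of_ne hw₂]; exact hz2⟩
    have hman := (DA_spec mp (Function.update pw w' q)).2 _ hstab x
    have hpess := DA_pess mp (Function.update pw w' q) _ hstab w'
    rw [Function.update_self, hba] at hpess
    by_cases hca : (DA mp (Function.update pw w' r)).symm w' = a
    · -- the r-instance gives w' exactly a; then x strictly improves, contradiction
      have h1 : ¬ SPref (mp x) w' ((DA mp (Function.update pw w' r)) x) := by
        intro hx
        exact (DA_spec mp (Function.update pw w' r)).1 x w'
          ⟨hx, by rw [Function.update_self, hca]; exact hA a (Ne.symm hxa)⟩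
      have h3 : (DA mp (Function.update pw w' r)) x ≠ w' := by
        intro hc2
        apply hxa
        have h7 : (DA mp (Function.update pw w' r)).symm w' = x :=
          (Equiv.symm_apply_eq _).mpr hc2.symm
        exact h7.symm.trans hca
      have h4 : SPref (mp x) ((DA mp (Function.update pw w' r)) x) w' :=
        spref_of_wpref_ne (wpref_of_not_spref h1) h3
      exact absurd hb1 (not_lt.mpr (le_trans hman (le_of_lt h4)))
    · -- the r-instance gives w' someone q-above a, hence cur-above a: contradicts optimality
      have h5 : SPref q ((DA mp (Function.update pw w' r)).symm w') a :=
        spref_of_wpref_ne hpess hca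
      have h6 : SPref (pw w') ((DA mp (Function.update pw w' r)).symm w') a := by
        rcases spref_or (p := pw w') hca with h | h
        · exact h
        · exact absurd (ha2 _ h) (lt_asymm h5)
      have hle := hopt r
      rw [hba] at hle
      exact absurd h6 (not_lt.mpr hle)

lemma step_phi {mp : Profile n} {Pw : Set (Fin n)} {p p' : Profile n}
    (hstep : InconspicuousStep mp Pw p p') :
    (∑ m, ((mp m).symm (DA mp p m) : ℕ)) + 1 ≤ ∑ m, ((mp m).symm (DA mp p' m) : ℕ) := by
  obtain ⟨w, _, q, hp', hinc, hstrict, hoptt⟩ := hstep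
  subst hp'
  have hstable := key_stable mp p w q hinc hoptt
  have hall := (DA_spec mp p).2 _ hstable
  have hm0ne : DA mp p ((DA mp (Function.update p w q)).symm w) ≠ w := by
    intro hc
    have h2 : (DA mp p).symm w = (DA mp (Function.update p w q)).symm w :=
      (Equiv.symm_apply_eq _).mpr hc.symm
    rw [← h2] at hstrict
    exact lt_irrefl _ hstrict
  have happ : DA mp (Function.update p w q) ((DA mp (Function.update p w q)).symm w) = w :=
    Equiv.apply_symm_apply _ w
  refine Nat.succ_le_of_lt (Finset.sum_lt_sum (fun i _ => Fin.le_def.mp (hall i)) ?_)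
  refine ⟨(DA mp (Function.update p w q)).symm w, Finset.mem_univ _, ?_⟩
  have h1 := hall ((DA mp (Function.update p w q)).symm w)
  have h2 : (mp ((DA mp (Function.update p w q)).symm w)).symm
        (DA mp p ((DA mp (Function.update p w q)).symm w)) ≠
      (mp ((DA mp (Function.update p w q)).symm w)).symm
        (DA mp (Function.update p w q) ((DA mp (Function.update p w q)).symm w)) := by
    intro hc
    exact hm0ne ((Equiv.injective _ hc).trans happ)
  exact Fin.lt_def.mp (lt_of_le_of_ne h1 h2)

end Aux

theorem inconspicuous_dynamic_converges {n : ℕ} (mp wp : Profile n)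
    (Pw : Set (Fin n)) (pw : ℕ → Profile n)
    (h : IsInconspicuousDynamic mp wp Pw pw) :
    ∃ T ≤ n ^ 2, ∀ t, T ≤ t → pw t = pw T := by
  obtain ⟨h0, hdyn⟩ := h
  have hstay : ∀ T, ¬ InconspicuousStep mp Pw (pw T) (pw (T + 1)) →
      ∀ t, T ≤ t → pw t = pw T := by
    intro T hT t ht
    obtain ⟨s, rfl⟩ := Nat.exists_eq_add_of_le ht
    clear ht
    induction s with
    | zero => rfl
    | succ s ih =>
      rcases hdyn (T + s) with hstep | ⟨heq, _⟩
      · exfalso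
        rcases hdyn T with hstepT | ⟨heqT, hnex⟩
        · exact hT hstepT
        · exact hnex ⟨pw (T + s + 1), ih ▸ hstep⟩
      · rw [Nat.add_succ, heq, ih]
  rcases Nat.eq_zero_or_pos n with hn | hn
  · subst hn
    refine ⟨0, Nat.zero_le _, ?_⟩
    apply hstay 0
    intro hstep
    obtain ⟨w, _, _⟩ := hstep
    exact w.elim0
  · by_cases hall : ∀ t, t < n ^ 2 → InconspicuousStep mp Pw (pw t) (pw (t + 1))
    · exfalso
      have hmono : ∀ t, t ≤ n ^ 2 → t ≤ ∑ m, ((mp m).symm (DA mp (pw t) m) : ℕ) := by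
        intro t
        induction t with
        | zero => intro _; exact Nat.zero_le _
        | succ t ih =>
          intro hle
          have h1 := ih (by omega)
          have h2 := step_phi (hall t (by omega))
          omega
      have hb := hmono (n ^ 2) (le_refl _)
      have hub : ∑ m, ((mp m).symm (DA mp (pw (n ^ 2)) m) : ℕ) ≤ n * (n - 1) := by
        have := Finset.sum_le_sum (s := (Finset.univ : Finset (Fin n)))
          (f := fun m => ((mp m).symm (DA mp (pw (n ^ 2)) m) : ℕ)) (g := fun _ => n - 1)
          (fun m _ => by
            show ((mp m).symm (DA mp (pw (n ^ 2)) m) : ℕ) ≤ n - 1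
            have := ((mp m).symm (DA mp (pw (n ^ 2)) m)).is_lt
            omega)
        rwa [Finset.sum_const, Finset.card_univ, Fintype.card_fin, smul_eq_mul] at this
      have hsq : n ^ 2 = n * n := pow_two n
      have hmm : n * (n - 1) + n = n * n := by
        rw [← Nat.mul_succ]
        congr 1
        omega
      omega
    · push_neg at hall
      obtain ⟨T, hT1, hT2⟩ := hall
      exact ⟨T, by omega, hstay T hT2⟩

-- axiom check
-- #print axioms inconspicuous_dynamic_converges
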